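/- arXiv:2412.05014 — 2 statements merged into one kernel-verified Lean document; each statement's English description precedes it below -/
import Mathlib

section
/- Among the 24 bijective Mealy automata with two states over the alphabet {0,1}, exactly 6 are particle-preserving, and exactly 5 are both transitive and particle-preserving. -/
/-- Reachability via a finite word of letters. -/
def mealyReach {Q S : Type*} (φ : Q × S → Q) (q q' : Q) : Prop :=
  ∃ w : List S, w.foldl (fun a s => φ (a, s)) q = q'

/-- The transition function is transitive: every state is reachable from every state. -/
def mealyTransitive {Q S : Type*} (φ : Q × S → Q) : Prop :=
  ∀ q q' : Q, mealyReach φ q q'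

/-- The automaton `(φ, ψ)` is bijective (right-invertible). -/
def mealyBijective {Q S : Type*} (φ : Q × S → Q) (ψ : Q × S → S) : Prop :=
  Function.Bijective (fun x : Q × S => (φ x, ψ x))

/-- The automaton `(φ, ψ)` is particle-preserving: there is a weight function on `Q ∪ S`
(given by its restrictions `wq`, `ws` to states and letters), not identically constant
on the alphabet `S`, with `w(q) + w(s) = w(φ(q,s)) + w(ψ(q,s))`. -/
def mealyParticlePreserving {Q S : Type*} (φ : Q × S → Q) (ψ : Q × S → S) : Prop :=
  ∃ (wq : Q → ℝ) (ws : S → ℝ), (¬ ∀ s s' : S, ws s = ws s') ∧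
    ∀ q : Q, ∀ s : S, wq q + ws s = wq (φ (q, s)) + ws (ψ (q, s))

namespace Stmt6Aux

abbrev E := Fin 2 × Fin 2
abbrev F := E → Fin 2

def c1 (φ : F) (e : E) : ℤ := (e.1 : ℤ) - (φ e : ℤ)
def c2 (ψ : F) (e : E) : ℤ := (ψ e : ℤ) - (e.2 : ℤ)

def ppDec (φ ψ : F) : Prop :=
  (∀ e : E, c1 φ e = 0 → c2 ψ e = 0) ∧
  ∀ e e' : E, c1 φ e * c2 ψ e' = c2 ψ e * c1 φ e'

instance : DecidablePred fun p : F × F => ppDec p.1 p.2 := by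
  intro p; unfold ppDec; infer_instance

lemma fin2 (x : Fin 2) : x = 0 ∨ x = 1 := by omega

lemma pp_iff (φ ψ : F) : mealyParticlePreserving φ ψ ↔ ppDec φ ψ := by
  constructor
  · rintro ⟨wq, ws, hne, heq⟩
    have h01 : ws 0 ≠ ws 1 := by
      intro h; apply hne; intro s s'
      rcases fin2 s with hs | hs <;> rcases fin2 s' with hs' | hs' <;>
        subst hs <;> subst hs' <;> simp [h]
    set a := wq 1 - wq 0 with ha
    set t := ws 1 - ws 0 with htdef
    have ht : t ≠ 0 := sub_ne_zero.mpr (Ne.symm h01)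
    have key : ∀ e : E, (c1 φ e : ℝ) * a = (c2 ψ e : ℝ) * t := by
      rintro ⟨q, s⟩
      have h := heq q s
      simp only [c1, c2]
      rcases fin2 (φ (q, s)) with h1 | h1 <;> rcases fin2 (ψ (q, s)) with h2 | h2 <;>
        rcases fin2 q with hq | hq <;> rcases fin2 s with hs | hs <;>
          subst hq <;> subst hs <;> rw [h1, h2] at h ⊢ <;>
            norm_num <;> linarith [h]
    constructor
    · intro e he
      have hk : (c2 ψ e : ℝ) * t = 0 := by
        rw [← key e, he]; push_cast; ring
      have h2 : (c2 ψ e : ℝ) = 0 := by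
        rcases mul_eq_zero.mp hk with h | h
        · exact h
        · exact absurd h ht
      exact_mod_cast h2
    · intro e e'
      have h1 := key e
      have h2 := key e'
      have hm : ((c1 φ e * c2 ψ e' : ℤ) : ℝ) * t = ((c2 ψ e * c1 φ e' : ℤ) : ℝ) * t := by
        push_cast
        linear_combination (c1 φ e' : ℝ) * h1 - (c1 φ e : ℝ) * h2
      exact_mod_cast mul_right_cancel₀ ht hm
  · rintro ⟨h0, hcross⟩
    by_cases hall : ∀ e : E, c1 φ e = 0
    · refine ⟨fun _ => 0, fun s => (s : ℝ), ?_, ?_⟩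
      · intro h; have := h 0 1; norm_num at this
      · intro q s
        have h2 : c2 ψ (q, s) = 0 := h0 _ (hall _)
        have hz : ((ψ (q, s) : ℤ)) - (s : ℤ) = 0 := by simpa [c2] using h2
        have hψ : ψ (q, s) = s := by omega
        simp only [hψ]
    · push_neg at hall
      obtain ⟨e0, he0⟩ := hall
      have ht : ((c1 φ e0 : ℤ) : ℝ) ≠ 0 := Int.cast_ne_zero.mpr he0
      refine ⟨fun q => (q : ℝ) * (c2 ψ e0 : ℝ), fun s => (s : ℝ) * (c1 φ e0 : ℝ), ?_, ?_⟩
      · intro h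
        have := h 0 1
        simp at this
        exact ht this.symm
      · intro q s
        have hc := hcross (q, s) e0
        have hcr : ((c1 φ (q, s) : ℤ) : ℝ) * (c2 ψ e0 : ℝ)
            = ((c2 ψ (q, s) : ℤ) : ℝ) * (c1 φ e0 : ℝ) := by exact_mod_cast hc
        simp only [c1, c2] at hcr ⊢
        push_cast at hcr ⊢
        linear_combination hcr

lemma trans_iff (φ : F) : mealyTransitive φ ↔ ∀ q : Fin 2, ∃ s : Fin 2, φ (q, s) ≠ q := by
  have two : ∀ x y z : Fin 2, x ≠ y → z ≠ y → x = z := by decide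
  constructor
  · intro h q
    by_contra hc
    push_neg at hc
    obtain ⟨w, hw⟩ := h q (q + 1)
    have stay : ∀ w : List (Fin 2), w.foldl (fun a s => φ (a, s)) q = q := by
      intro w
      induction w with
      | nil => rfl
      | cons s w ih => simpa [hc] using ih
    rw [stay] at hw
    have : q ≠ q + 1 := by omega
    exact this hw
  · intro h q q'
    by_cases hqq : q = q'
    · exact ⟨[], hqq⟩
    · obtain ⟨s, hs⟩ := h q
      refine ⟨[s], ?_⟩
      simpa using two (φ (q, s)) q q' hs (Ne.symm hqq)

instance : DecidablePred fun p : F × F => mealyBijective p.1 p.2 := by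
  intro p; unfold mealyBijective; infer_instance

def transDec (φ : F) : Prop := ∀ q : Fin 2, ∃ s : Fin 2, φ (q, s) ≠ q

instance : DecidablePred transDec := by intro φ; unfold transDec; infer_instance

end Stmt6Aux

open Stmt6Aux in
/-- Among the bijective Mealy automata with two states over a 2-letter alphabet,
exactly 6 are particle-preserving and exactly 5 are both transitive and
particle-preserving. -/
theorem stmt_6 :
    ({p : (Fin 2 × Fin 2 → Fin 2) × (Fin 2 × Fin 2 → Fin 2) |
        mealyBijective p.1 p.2 ∧ mealyParticlePreserving p.1 p.2}.ncard = 6) ∧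
    ({p : (Fin 2 × Fin 2 → Fin 2) × (Fin 2 × Fin 2 → Fin 2) |
        mealyBijective p.1 p.2 ∧ mealyTransitive p.1 ∧
          mealyParticlePreserving p.1 p.2}.ncard = 5) := by
  constructor
  · have hs : {p : F × F | mealyBijective p.1 p.2 ∧ mealyParticlePreserving p.1 p.2}
        = ↑(Finset.univ.filter fun p : F × F => mealyBijective p.1 p.2 ∧ ppDec p.1 p.2) := by
      ext p
      simp [pp_iff]
    rw [hs, Set.ncard_coe_finset]
    decide
  · have hs : {p : F × F | mealyBijective p.1 p.2 ∧ mealyTransitive p.1 ∧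
          mealyParticlePreserving p.1 p.2}
        = ↑(Finset.univ.filter fun p : F × F =>
            mealyBijective p.1 p.2 ∧ transDec p.1 ∧ ppDec p.1 p.2) := by
      ext p
      simp [pp_iff, trans_iff, transDec]
    rw [hs, Set.ncard_coe_finset]
    decide
end

section
/- Under the time evolution of the BBS-S(2) automaton MA-[3,2,154,7], the linearizing coordinates satisfy b_j^t = b_j^0 + t and c_j^t = c_j^0 + 2t for all t ≥ 0 and all j, i.e., the dynamics is linearized: each b-coordinate advances by 1 per time step and each c-coordinate by 2 per time step. -/
/-- Transition function of MA-[3,2,154,7] (BBS-S(2)). -/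
def phiS2 : Fin 3 × Fin 2 → Fin 3 := fun p => ![![0, 1], ![2, 2], ![0, 1]] p.1 p.2

/-- Exit function of MA-[3,2,154,7] (BBS-S(2)). -/
def psiS2 : Fin 3 × Fin 2 → Fin 2 := fun p => ![![0, 0], ![0, 1], ![1, 1]] p.1 p.2

/-- The state of the automaton after reading the first `n` letters of the semi-infinite
sequence `u`, starting from the initial state `q₀ = 0`. -/
def stateS2 (u : ℕ → Fin 2) : ℕ → Fin 3
  | 0 => 0
  | n + 1 => phiS2 (stateS2 u n, u n)

/-- One time step of the BBS-S(2): the output sequence of MA-[3,2,154,7] applied to the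
semi-infinite sequence `u` from the initial state `q₀`. -/
def evolveS2 (u : ℕ → Fin 2) : ℕ → Fin 2 := fun n => psiS2 (stateS2 u n, u n)

/-- The b/c encoding (carrying the number `z` of 0s read so far and the length `r` of
the current run of 1s): each maximal block `1^(2k)` gives `k` letters `b`, each block
`1^(2k+1)` gives `k` letters `b` and one `c`; the lists record the number of 0s to the
left of each `b` and of each `c`. -/
def bcEncodeAux : ℕ → ℕ → List (Fin 2) → List ℕ × List ℕ
  | z, r, [] => (List.replicate (r / 2) z, if r % 2 = 1 then [z] else [])
  | z, r, a :: t =>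
    if a = 1 then bcEncodeAux z (r + 1) t
    else
      let p := bcEncodeAux (z + 1) 0 t
      (List.replicate (r / 2) z ++ p.1, (if r % 2 = 1 then [z] else []) ++ p.2)

/-- The b/c coordinates of a semi-infinite sequence, read off from its first `N`
entries (for `N` beyond all the 1s of the sequence). -/
def bcCoords (u : ℕ → Fin 2) (N : ℕ) : List ℕ × List ℕ :=
  bcEncodeAux 0 0 ((List.range N).map u)

-- run of the automaton on a list from state q
def outList : Fin 3 → List (Fin 2) → List (Fin 2)
  | _, [] => []
  | q, a :: t => psiS2 (q, a) :: outList (phiS2 (q, a)) t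

def stAfter : Fin 3 → List (Fin 2) → Fin 3
  | q, [] => q
  | q, a :: t => stAfter (phiS2 (q, a)) t

lemma outList_append (q : Fin 3) (l l' : List (Fin 2)) :
    outList q (l ++ l') = outList q l ++ outList (stAfter q l) l' := by
  induction l generalizing q with
  | nil => simp [outList, stAfter]
  | cons a t ih => simp [outList, stAfter, ih]

lemma stAfter_append (q : Fin 3) (l l' : List (Fin 2)) :
    stAfter q (l ++ l') = stAfter (stAfter q l) l' := by
  induction l generalizing q with
  | nil => simp [stAfter]
  | cons a t ih => simp [stAfter, ih]

lemma state_eq (u : ℕ → Fin 2) (n : ℕ) :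
    stateS2 u n = stAfter 0 ((List.range n).map u) := by
  induction n with
  | zero => simp [stateS2, stAfter]
  | succ n ih =>
    rw [List.range_succ, List.map_append, stAfter_append, ← ih]
    simp [stateS2, stAfter]

lemma evolve_range (u : ℕ → Fin 2) (n : ℕ) :
    (List.range n).map (evolveS2 u) = outList 0 ((List.range n).map u) := by
  induction n with
  | zero => simp [outList]
  | succ n ih =>
    rw [List.range_succ, List.map_append, List.map_append, outList_append, ← ih, ← state_eq]
    simp [outList, evolveS2]

lemma bc_append_zero (l : List (Fin 2)) : ∀ z r,
    bcEncodeAux z r (l ++ [0]) = bcEncodeAux z r l := by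
  induction l with
  | nil => intro z r; simp [bcEncodeAux]
  | cons a t ih =>
    intro z r
    by_cases h : a = 1 <;> simp [bcEncodeAux, h, ih]

lemma bc_append_zeros (k : ℕ) : ∀ (l : List (Fin 2)) z r,
    bcEncodeAux z r (l ++ List.replicate k 0) = bcEncodeAux z r l := by
  induction k with
  | zero => simp
  | succ k ih =>
    intro l z r
    have : l ++ List.replicate (k+1) 0 = (l ++ [0]) ++ List.replicate k 0 := by
      simp [List.replicate_succ]
    rw [this, ih, bc_append_zero]

lemma bcCoords_stable (u : ℕ → Fin 2) (N M : ℕ) (h : ∀ n, N ≤ n → u n = 0) (hNM : N ≤ M) :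
    bcCoords u M = bcCoords u N := by
  have hr : (List.range M).map u = (List.range N).map u ++ List.replicate (M - N) 0 := by
    have : M = N + (M - N) := by omega
    rw [this, List.range_add, List.map_append, List.map_map]
    congr 1
    have := List.eq_replicate_of_mem (l := (List.range (M - N)).map (u ∘ (N + ·))) (a := (0 : Fin 2)) ?_
    · simpa using this
    · intro b hb
      simp only [List.mem_map, List.mem_range] at hb
      obtain ⟨i, _, rfl⟩ := hb
      simpa using h (N + i) (Nat.le_add_right N i)
  unfold bcCoords
  rw [hr, bc_append_zeros]


lemma fin2_cases (a : Fin 2) : a = 0 ∨ a = 1 := by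
  match a with
  | 0 => exact Or.inl rfl
  | 1 => exact Or.inr rfl

lemma bcE_cons0 (z r : ℕ) (t : List (Fin 2)) :
    bcEncodeAux z r (0 :: t) =
      (List.replicate (r / 2) z ++ (bcEncodeAux (z + 1) 0 t).1,
       (if r % 2 = 1 then [z] else []) ++ (bcEncodeAux (z + 1) 0 t).2) := by
  simp [bcEncodeAux]

lemma bcE_cons1 (z r : ℕ) (t : List (Fin 2)) :
    bcEncodeAux z r (1 :: t) = bcEncodeAux z (r + 1) t := by
  simp [bcEncodeAux]

lemma main_lemma (l : List (Fin 2)) : ∀ z : ℕ,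
    (∀ r', bcEncodeAux z r' (outList 0 (l ++ [0, 0])) =
      (List.replicate (r' / 2) z ++ (bcEncodeAux z 0 l).1.map (· + 1),
       (if r' % 2 = 1 then [z] else []) ++ (bcEncodeAux z 0 l).2.map (· + 2))) ∧
    (∀ r, r % 2 = 1 →
      bcEncodeAux (z + 1) (r - 1) (outList 1 (l ++ [0, 0])) =
        ((bcEncodeAux z r l).1.map (· + 1), (bcEncodeAux z r l).2.map (· + 2)) ∧
      bcEncodeAux (z + 1) r (outList 1 (l ++ [0, 0])) =
        ((bcEncodeAux z r l).1.map (· + 1), (z + 1) :: (bcEncodeAux z r l).2.map (· + 2))) ∧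
    (∀ r, r % 2 = 0 →
      (2 ≤ r → bcEncodeAux (z + 1) (r - 1) (outList 2 (l ++ [0, 0])) =
        ((bcEncodeAux z r l).1.map (· + 1), (bcEncodeAux z r l).2.map (· + 2))) ∧
      bcEncodeAux (z + 1) r (outList 2 (l ++ [0, 0])) =
        ((bcEncodeAux z r l).1.map (· + 1), (z + 1) :: (bcEncodeAux z r l).2.map (· + 2))) := by
  induction l with
  | nil =>
    intro z
    refine ⟨?_, ?_, ?_⟩
    · intro r'
      show bcEncodeAux z r' (outList 0 [0,0]) = _
      have h : outList 0 [0,0] = [0,0] := by decide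
      rw [h]
      simp [bcEncodeAux]
    · intro r hr
      obtain ⟨k, rfl⟩ : ∃ k, r = 2 * k + 1 := ⟨r / 2, by omega⟩
      have h : outList 1 ([] ++ [0,0]) = [0,1] := by decide
      rw [h]
      constructor
      · have e1 : 2 * k + 1 - 1 = 2 * k := by omega
        rw [e1]
        simp [bcEncodeAux, Nat.mul_div_cancel_left, Nat.mul_mod_right,
          Nat.mul_add_div, Nat.mul_add_mod]
      · simp [bcEncodeAux, Nat.mul_add_div, Nat.mul_add_mod]
    · intro r hr
      obtain ⟨k, rfl⟩ : ∃ k, r = 2 * k := ⟨r / 2, by omega⟩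
      have h : outList 2 ([] ++ [0,0]) = [1,0] := by decide
      rw [h]
      constructor
      · intro h2
        have e1 : 2 * k - 1 + 1 = 2 * k := by omega
        simp only [bcEncodeAux, show ((1:Fin 2) = 1) = True from by simp, if_true, e1]
        simp [bcEncodeAux, Nat.mul_div_cancel_left, Nat.mul_mod_right]
      · simp only [bcEncodeAux, show ((1:Fin 2) = 1) = True from by simp, if_true]
        simp [bcEncodeAux, Nat.mul_add_div, Nat.mul_add_mod, Nat.mul_div_cancel_left,
          Nat.mul_mod_right]
  | cons a t ih =>
    intro z
    refine ⟨?_, ?_, ?_⟩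
    · -- q = 0
      intro r'
      rcases fin2_cases a with rfl | rfl
      · -- a = 0
        have ho : outList 0 (((0:Fin 2) :: t) ++ [0,0]) = 0 :: outList 0 (t ++ [0,0]) := rfl
        rw [ho, bcE_cons0, bcE_cons0]
        rw [((ih (z+1)).1 0)]
        simp
      · -- a = 1
        have ho : outList 0 (((1:Fin 2) :: t) ++ [0,0]) = 0 :: outList 1 (t ++ [0,0]) := rfl
        rw [ho, bcE_cons0, bcE_cons1]
        have h1 := ((ih z).2.1 1 (by norm_num)).1
        simp only [show 1 - 1 = 0 from rfl] at h1
        rw [h1]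
    · -- q = 1
      intro r hr
      obtain ⟨k, rfl⟩ : ∃ k, r = 2 * k + 1 := ⟨r / 2, by omega⟩
      rcases fin2_cases a with rfl | rfl
      · -- a = 0
        have ho : outList 1 (((0:Fin 2) :: t) ++ [0,0]) = 0 :: outList 2 (t ++ [0,0]) := rfl
        have hP := ((ih (z+1)).2.2 0 (by norm_num)).2
        constructor
        · rw [ho]
          have e1 : 2 * k + 1 - 1 = 2 * k := by omega
          rw [e1, bcE_cons0, bcE_cons0, hP]
          simp [Nat.mul_div_cancel_left, Nat.mul_mod_right, Nat.mul_add_div,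
            Nat.mul_add_mod, List.map_replicate]
        · rw [ho, bcE_cons0, bcE_cons0, hP]
          simp [Nat.mul_div_cancel_left, Nat.mul_mod_right, Nat.mul_add_div,
            Nat.mul_add_mod, List.map_replicate]
      · -- a = 1
        have ho : outList 1 (((1:Fin 2) :: t) ++ [0,0]) = 1 :: outList 2 (t ++ [0,0]) := rfl
        have hK := (ih z).2.2 (2 * k + 1 + 1) (by omega)
        constructor
        · rw [ho]
          have e1 : 2 * k + 1 - 1 = 2 * k := by omega
          rw [e1, bcE_cons1, bcE_cons1]
          have e2 : 2 * k + 1 = 2 * k + 1 + 1 - 1 := by omega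
          rw [e2]
          exact hK.1 (by omega)
        · rw [ho, bcE_cons1, bcE_cons1]
          exact hK.2
    · -- q = 2
      intro r hr
      obtain ⟨k, rfl⟩ : ∃ k, r = 2 * k := ⟨r / 2, by omega⟩
      rcases fin2_cases a with rfl | rfl
      · -- a = 0
        have ho : outList 2 (((0:Fin 2) :: t) ++ [0,0]) = 1 :: outList 0 (t ++ [0,0]) := rfl
        constructor
        · intro h2
          rw [ho, bcE_cons1]
          have e1 : 2 * k - 1 + 1 = 2 * k := by omega
          rw [e1, (ih (z+1)).1 (2 * k), bcE_cons0]
          simp [Nat.mul_div_cancel_left, Nat.mul_mod_right, List.map_replicate]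
        · rw [ho, bcE_cons1, (ih (z+1)).1 (2 * k + 1), bcE_cons0]
          simp [Nat.mul_div_cancel_left, Nat.mul_mod_right, Nat.mul_add_div,
            Nat.mul_add_mod, List.map_replicate]
      · -- a = 1
        have ho : outList 2 (((1:Fin 2) :: t) ++ [0,0]) = 1 :: outList 1 (t ++ [0,0]) := rfl
        have hK := (ih z).2.1 (2 * k + 1) (by omega)
        constructor
        · intro h2
          rw [ho, bcE_cons1, bcE_cons1]
          have e1 : 2 * k - 1 + 1 = 2 * k := by omega
          rw [e1]
          have e2 : 2 * k = 2 * k + 1 - 1 := by omega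
          rw [e2]
          exact hK.1
        · rw [ho, bcE_cons1, bcE_cons1]
          exact hK.2

lemma state_zero (u : ℕ → Fin 2) (N : ℕ) (h : ∀ n, N ≤ n → u n = 0) :
    ∀ n, N + 2 ≤ n → stateS2 u n = 0 := by
  have key : ∀ k, stateS2 u (N + 2 + k) = 0 := by
    intro k
    induction k with
    | zero =>
      show stateS2 u (N + 1 + 1) = 0
      have h1 : u N = 0 := h N le_rfl
      have h2 : u (N + 1) = 0 := h _ (by omega)
      have : ∀ q : Fin 3, phiS2 (phiS2 (q, 0), 0) = 0 := by decide
      simp only [stateS2, h1, h2]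
      exact this _
    | succ k ih =>
      show stateS2 u (N + 2 + k + 1) = 0
      simp only [stateS2, ih, h _ (by omega : N ≤ N + 2 + k)]
      decide
  intro n hn
  obtain ⟨k, rfl⟩ : ∃ k, n = N + 2 + k := ⟨n - (N + 2), by omega⟩
  exact key k

lemma evolve_support (u : ℕ → Fin 2) (N : ℕ) (h : ∀ n, N ≤ n → u n = 0) :
    ∀ n, N + 2 ≤ n → evolveS2 u n = 0 := by
  intro n hn
  have hs := state_zero u N h n hn
  simp only [evolveS2, hs, h n (by omega)]
  decide

lemma one_step (u : ℕ → Fin 2) (N : ℕ) (h : ∀ n, N ≤ n → u n = 0) :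
    bcCoords (evolveS2 u) (N + 2) =
      ((bcCoords u N).1.map (· + 1), (bcCoords u N).2.map (· + 2)) := by
  unfold bcCoords
  rw [evolve_range]
  have hr : (List.range (N + 2)).map u = (List.range N).map u ++ [0, 0] := by
    rw [show N + 2 = N + 1 + 1 from rfl, List.range_succ, List.range_succ]
    simp [h N le_rfl, h (N + 1) (by omega)]
  rw [hr]
  have := (main_lemma ((List.range N).map u) 0).1 0
  simpa using this

lemma map_add_add (L : List ℕ) (a b : ℕ) :
    (L.map (· + a)).map (· + b) = L.map (· + (a + b)) := by
  rw [List.map_map]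
  apply List.map_congr_left
  intro x _
  simp [Function.comp]
  omega

/-- Linearization of BBS-S(2): the b-coordinates advance by `1` and the c-coordinates
by `2` at each time step: `bⱼᵗ = bⱼ⁰ + t` and `cⱼᵗ = cⱼ⁰ + 2t`. -/
theorem stmt_10 (u : ℕ → Fin 2) (N : ℕ) (hu : ∀ n, N ≤ n → u n = 0)
    (t M : ℕ) (hM : ∀ n, M ≤ n → (evolveS2^[t] u) n = 0) :
    (bcCoords (evolveS2^[t] u) M).1 = (bcCoords u N).1.map (· + t) ∧
    (bcCoords (evolveS2^[t] u) M).2 = (bcCoords u N).2.map (· + 2 * t) := by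
  have key : ∀ s : ℕ, (∀ n, N + 2 * s ≤ n → (evolveS2^[s] u) n = 0) ∧
      bcCoords (evolveS2^[s] u) (N + 2 * s) =
        ((bcCoords u N).1.map (· + s), (bcCoords u N).2.map (· + 2 * s)) := by
    intro s
    induction s with
    | zero =>
      refine ⟨by simpa using hu, ?_⟩
      simp
    | succ s ih =>
      obtain ⟨ihz, ihc⟩ := ih
      have hz' : ∀ n, N + 2 * s + 2 ≤ n → (evolveS2^[s + 1] u) n = 0 := by
        intro n hn
        rw [Function.iterate_succ_apply']
        exact evolve_support _ _ ihz n hn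
      constructor
      · intro n hn
        exact hz' n (by omega)
      · have h1 : bcCoords (evolveS2^[s + 1] u) (N + 2 * (s + 1)) =
            bcCoords (evolveS2 (evolveS2^[s] u)) (N + 2 * s + 2) := by
          rw [show N + 2 * (s + 1) = N + 2 * s + 2 from by ring,
            Function.iterate_succ_apply']
        rw [h1, one_step _ _ ihz, ihc]
        simp only [map_add_add, show 2 * s + 2 = 2 * (s + 1) from by ring]
  obtain ⟨hz, hc⟩ := key t
  have hstab : bcCoords (evolveS2^[t] u) M = bcCoords (evolveS2^[t] u) (N + 2 * t) := by
    rw [← bcCoords_stable (evolveS2^[t] u) (N + 2 * t) (M + N + 2 * t) hz (by omega),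
        ← bcCoords_stable (evolveS2^[t] u) M (M + N + 2 * t) hM (by omega)]
  rw [hstab, hc]
  exact ⟨rfl, rfl⟩
end
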